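/- Suppose the LSTM system is δISS in X and U, i.e. there exist a class-KL function β and a class-K∞ function γ such that any two trajectories starting in X with inputs in U satisfy ‖x_{a,k} − x_{b,k}‖ ≤ β(‖x_{a,0} − x_{b,0}‖, k) + γ(max_{0≤h<k}‖u_{a,h} − u_{b,h}‖). Then for every u ∈ U and every y ∈ ℝᵖ there exist a unique x* ∈ X and a unique d* ∈ ℝᵖ such that x* = f(x*, u) and y = g(x*) + d*. -/

import Mathlib

open Matrix Filter Set
open scoped ENNReal NNReal BigOperators

noncomputable section

namespace LSTMmpc

/-- The logistic sigmoid `σ(z) = 1/(1+e^{-z})`. -/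
def sigmoid (z : ℝ) : ℝ := 1 / (1 + Real.exp (-z))

/-- Euclidean norm of a finite real vector. -/
def enorm {k : ℕ} (v : Fin k → ℝ) : ℝ := Real.sqrt (∑ i, v i ^ 2)

/-- Sup (∞) norm of a finite real vector. -/
def vinf {k : ℕ} (v : Fin k → ℝ) : ℝ := ⨆ i, |v i|

/-- Spectral (ℓ²-induced) norm of a real matrix. -/
def spec {a b : ℕ} (M : Matrix (Fin a) (Fin b) ℝ) : ℝ :=
  ⨆ v : {v : Fin b → ℝ // enorm v ≤ 1}, enorm (M.mulVec v.1)

/-- Induced ∞-norm (maximum absolute row sum) of the horizontal block `[s•A, B, v]`. -/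
def rowNorm3 {n m : ℕ} (s : ℝ) (A : Matrix (Fin n) (Fin m) ℝ)
    (B : Matrix (Fin n) (Fin n) ℝ) (v : Fin n → ℝ) : ℝ :=
  ⨆ i, (∑ j, |s * A i j| + ∑ j, |B i j| + |v i|)

/-- Induced ∞-norm of the horizontal block `[s•A, B, v, C, t•D]`. -/
def rowNorm5 {n m p : ℕ} (s : ℝ) (A : Matrix (Fin n) (Fin m) ℝ)
    (B : Matrix (Fin n) (Fin n) ℝ) (v : Fin n → ℝ)
    (C : Matrix (Fin n) (Fin n) ℝ) (t : ℝ) (D : Matrix (Fin n) (Fin p) ℝ) : ℝ :=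
  ⨆ i, (∑ j, |s * A i j| + ∑ j, |B i j| + |v i| + ∑ j, |C i j| + ∑ j, |t * D i j|)

/-- Weighted norm `‖v‖_P = √(vᵀ P v)`. -/
def wnorm {k : ℕ} (P : Matrix (Fin k) (Fin k) ℝ) (v : Fin k → ℝ) : ℝ :=
  Real.sqrt (v ⬝ᵥ P.mulVec v)

/-- Minimum eigenvalue of a hermitian real matrix. -/
def lamMin {k : ℕ} (P : Matrix (Fin k) (Fin k) ℝ) (hP : P.IsHermitian) : ℝ :=
  ⨅ i, hP.eigenvalues i

/-- Maximum eigenvalue of a hermitian real matrix. -/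
def lamMax {k : ℕ} (P : Matrix (Fin k) (Fin k) ℝ) (hP : P.IsHermitian) : ℝ :=
  ⨆ i, hP.eigenvalues i

/-- Spectral radius (over `ℂ`) of a real square matrix. -/
def specRad {k : ℕ} (M : Matrix (Fin k) (Fin k) ℝ) : ℝ≥0∞ :=
  spectralRadius ℂ (M.map (fun x : ℝ => (x : ℂ)))

/-- Class `K∞` functions `[0,∞) → [0,∞)`. -/
def IsClassKInf (γ : ℝ → ℝ) : Prop :=
  ContinuousOn γ (Set.Ici 0) ∧ γ 0 = 0 ∧ StrictMonoOn γ (Set.Ici 0) ∧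
    (∀ s, 0 ≤ s → 0 ≤ γ s) ∧ Tendsto γ atTop atTop

/-- Class `KL` functions. -/
def IsClassKL (β : ℝ → ℕ → ℝ) : Prop :=
  (∀ k, ContinuousOn (fun s => β s k) (Set.Ici 0) ∧
      StrictMonoOn (fun s => β s k) (Set.Ici 0) ∧ β 0 k = 0) ∧
  (∀ s, 0 < s → StrictAnti (fun k => β s k) ∧ Tendsto (fun k => β s k) atTop (nhds 0)) ∧
  (∀ s, 0 ≤ s → ∀ k, 0 ≤ β s k)

/-- Weights of an LSTM network. -/
structure LSTM (n m p : ℕ) where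
  Wf : Matrix (Fin n) (Fin m) ℝ
  Wi : Matrix (Fin n) (Fin m) ℝ
  Wc : Matrix (Fin n) (Fin m) ℝ
  Wo : Matrix (Fin n) (Fin m) ℝ
  Uf : Matrix (Fin n) (Fin n) ℝ
  Ui : Matrix (Fin n) (Fin n) ℝ
  Uc : Matrix (Fin n) (Fin n) ℝ
  Uo : Matrix (Fin n) (Fin n) ℝ
  bf : Fin n → ℝ
  bi : Fin n → ℝ
  bc : Fin n → ℝ
  bo : Fin n → ℝ
  Wy : Matrix (Fin p) (Fin n) ℝ
  bY : Fin p → ℝ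

/-- LSTM state `(c, h)`. -/
abbrev State (n : ℕ) := (Fin n → ℝ) × (Fin n → ℝ)

/-- Augmented state `(c, h, d)`. -/
abbrev AugState (n p : ℕ) := (Fin n → ℝ) × (Fin n → ℝ) × (Fin p → ℝ)

variable {n m p : ℕ}

def stepC (S : LSTM n m p) (u : Fin m → ℝ) (c h : Fin n → ℝ) : Fin n → ℝ := fun j =>
  sigmoid ((S.Wf.mulVec u + S.Uf.mulVec h + S.bf) j) * c j +
    sigmoid ((S.Wi.mulVec u + S.Ui.mulVec h + S.bi) j) *
      Real.tanh ((S.Wc.mulVec u + S.Uc.mulVec h + S.bc) j)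

def stepH (S : LSTM n m p) (u : Fin m → ℝ) (c h : Fin n → ℝ) : Fin n → ℝ := fun j =>
  sigmoid ((S.Wo.mulVec u + S.Uo.mulVec h + S.bo) j) * Real.tanh (stepC S u c h j)

/-- One step of the LSTM dynamics `x⁺ = f(x, u)`. -/
def step (S : LSTM n m p) (x : State n) (u : Fin m → ℝ) : State n :=
  (stepC S u x.1 x.2, stepH S u x.1 x.2)

/-- Output map `g(x) = W_y h + b_y`. -/
def out (S : LSTM n m p) (x : State n) : Fin p → ℝ := S.Wy.mulVec x.2 + S.bY

/-- LSTM trajectory. -/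
def traj (S : LSTM n m p) (x0 : State n) (u : ℕ → Fin m → ℝ) : ℕ → State n
  | 0 => x0
  | k + 1 => step S (traj S x0 u k) (u k)

def sFb (S : LSTM n m p) (umax : ℝ) : ℝ := sigmoid (rowNorm3 umax S.Wf S.Uf S.bf)
def sIb (S : LSTM n m p) (umax : ℝ) : ℝ := sigmoid (rowNorm3 umax S.Wi S.Ui S.bi)
def sOb (S : LSTM n m p) (umax : ℝ) : ℝ := sigmoid (rowNorm3 umax S.Wo S.Uo S.bo)
def sCb (S : LSTM n m p) (umax : ℝ) : ℝ := Real.tanh (rowNorm3 umax S.Wc S.Uc S.bc)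
def sXb (S : LSTM n m p) (umax : ℝ) : ℝ :=
  Real.tanh (sIb S umax * sCb S umax / (1 - sFb S umax))
def alphaD (S : LSTM n m p) (umax : ℝ) : ℝ :=
  (1/4) * spec S.Uf * (sIb S umax * sCb S umax / (1 - sFb S umax)) +
    sIb S umax * spec S.Uc + (1/4) * spec S.Ui * sCb S umax
def betaD (S : LSTM n m p) (umax : ℝ) : ℝ :=
  (1/4) * spec S.Wf * (sIb S umax * sCb S umax / (1 - sFb S umax)) +
    sIb S umax * spec S.Wc + (1/4) * spec S.Wi * sCb S umax
def Adelta (S : LSTM n m p) (umax : ℝ) : Matrix (Fin 2) (Fin 2) ℝ :=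
  !![sFb S umax, alphaD S umax;
     sOb S umax * sFb S umax, alphaD S umax * sOb S umax + (1/4) * sXb S umax * spec S.Uo]
def Bdelta (S : LSTM n m p) (umax : ℝ) : Fin 2 → ℝ :=
  ![betaD S umax, betaD S umax * sOb S umax + (1/4) * sXb S umax * spec S.Wo]

def setU (m : ℕ) (umax : ℝ) : Set (Fin m → ℝ) := {u | vinf u ≤ umax}
def setH (n : ℕ) : Set (Fin n → ℝ) := {h | vinf h ≤ 1}
def setC (S : LSTM n m p) (umax : ℝ) : Set (Fin n → ℝ) :=
  {c | vinf c ≤ sIb S umax * sCb S umax / (1 - sFb S umax)}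
def setX (S : LSTM n m p) (umax : ℝ) : Set (State n) := (setC S umax) ×ˢ (setH n)
def setD (p : ℕ) (dmax : ℝ) : Set (Fin p → ℝ) := {d | vinf d ≤ dmax}

/-- Euclidean norm of the full state. -/
def xnorm {n : ℕ} (x : State n) : ℝ := Real.sqrt (∑ i, x.1 i ^ 2 + ∑ i, x.2 i ^ 2)

/-- Euclidean norm of the augmented state. -/
def chinorm {n p : ℕ} (χ : AugState n p) : ℝ :=
  Real.sqrt (∑ i, χ.1 i ^ 2 + ∑ i, χ.2.1 i ^ 2 + ∑ i, χ.2.2 i ^ 2)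

/-- Incremental input-to-state stability of the LSTM in `X` and `U`. -/
def deltaISS (S : LSTM n m p) (umax : ℝ) : Prop :=
  ∃ β γ, IsClassKL β ∧ IsClassKInf γ ∧
    ∀ (k : ℕ) (xa0 xb0 : State n), xa0 ∈ setX S umax → xb0 ∈ setX S umax →
      ∀ ua ub : ℕ → Fin m → ℝ,
        (∀ h < k, ua h ∈ setU m umax) → (∀ h < k, ub h ∈ setU m umax) →
        xnorm (traj S xa0 ua k - traj S xb0 ub k) ≤
          β (xnorm (xa0 - xb0)) k + γ (⨆ h ∈ Finset.range k, enorm (ua h - ub h))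

/-- Observer gains. -/
structure Gains (n p : ℕ) where
  Lf : Matrix (Fin n) (Fin p) ℝ
  Li : Matrix (Fin n) (Fin p) ℝ
  Lo : Matrix (Fin n) (Fin p) ℝ
  Ld : Matrix (Fin p) (Fin p) ℝ

/-- Componentwise saturation to `[-dmax, dmax]`. -/
def sat {p : ℕ} (dmax : ℝ) (v : Fin p → ℝ) : Fin p → ℝ := fun j =>
  min (max (v j) (-dmax)) dmax

/-- Observer output `ŷ = W_y ĥ + b_y + d̂`. -/
def yhat (S : LSTM n m p) (hh : Fin n → ℝ) (dh : Fin p → ℝ) : Fin p → ℝ :=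
  S.Wy.mulVec hh + S.bY + dh

def obsC (S : LSTM n m p) (G : Gains n p) (u : Fin m → ℝ) (y : Fin p → ℝ)
    (ch hh : Fin n → ℝ) (dh : Fin p → ℝ) : Fin n → ℝ := fun j =>
  sigmoid ((S.Wf.mulVec u + S.Uf.mulVec hh + S.bf + G.Lf.mulVec (y - yhat S hh dh)) j) * ch j +
    sigmoid ((S.Wi.mulVec u + S.Ui.mulVec hh + S.bi + G.Li.mulVec (y - yhat S hh dh)) j) *
      Real.tanh ((S.Wc.mulVec u + S.Uc.mulVec hh + S.bc) j)

def obsH (S : LSTM n m p) (G : Gains n p) (u : Fin m → ℝ) (y : Fin p → ℝ)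
    (ch hh : Fin n → ℝ) (dh : Fin p → ℝ) : Fin n → ℝ := fun j =>
  sigmoid ((S.Wo.mulVec u + S.Uo.mulVec hh + S.bo + G.Lo.mulVec (y - yhat S hh dh)) j) *
    Real.tanh (obsC S G u y ch hh dh j)

def obsD (S : LSTM n m p) (G : Gains n p) (dmax : ℝ) (y : Fin p → ℝ)
    (hh : Fin n → ℝ) (dh : Fin p → ℝ) : Fin p → ℝ :=
  sat dmax (dh + G.Ld.mulVec (y - yhat S hh dh))

/-- One step of the observer. -/
def obsStep (S : LSTM n m p) (G : Gains n p) (dmax : ℝ) (u : Fin m → ℝ) (y : Fin p → ℝ)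
    (χ : AugState n p) : AugState n p :=
  (obsC S G u y χ.1 χ.2.1 χ.2.2, obsH S G u y χ.1 χ.2.1 χ.2.2, obsD S G dmax y χ.2.1 χ.2.2)

/-- Observer trajectory. -/
def obsTraj (S : LSTM n m p) (G : Gains n p) (dmax : ℝ) (u : ℕ → Fin m → ℝ)
    (y : ℕ → Fin p → ℝ) (χ0 : AugState n p) : ℕ → AugState n p
  | 0 => χ0
  | k + 1 => obsStep S G dmax (u k) (y k) (obsTraj S G dmax u y χ0 k)

def sFh (S : LSTM n m p) (G : Gains n p) (umax dmax : ℝ) : ℝ :=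
  sigmoid (rowNorm5 umax S.Wf (S.Uf - G.Lf * S.Wy) S.bf (G.Lf * S.Wy) (2 * dmax) G.Lf)
def sIh (S : LSTM n m p) (G : Gains n p) (umax dmax : ℝ) : ℝ :=
  sigmoid (rowNorm5 umax S.Wi (S.Ui - G.Li * S.Wy) S.bi (G.Li * S.Wy) (2 * dmax) G.Li)
def sOh (S : LSTM n m p) (G : Gains n p) (umax dmax : ℝ) : ℝ :=
  sigmoid (rowNorm5 umax S.Wo (S.Uo - G.Lo * S.Wy) S.bo (G.Lo * S.Wy) (2 * dmax) G.Lo)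
def alphaH (S : LSTM n m p) (G : Gains n p) (umax : ℝ) : ℝ :=
  (1/4) * (sIb S umax * sCb S umax / (1 - sFb S umax)) * spec (S.Uf - G.Lf * S.Wy) +
    sIb S umax * spec S.Uc + (1/4) * sCb S umax * spec (S.Ui - G.Li * S.Wy)
def betaH (S : LSTM n m p) (G : Gains n p) (umax : ℝ) : ℝ :=
  (1/4) * (sIb S umax * sCb S umax / (1 - sFb S umax)) * spec G.Lf +
    (1/4) * sCb S umax * spec G.Li
def gammaH (S : LSTM n m p) (G : Gains n p) (umax dmax : ℝ) : ℝ :=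
  sOh S G umax dmax * alphaH S G umax + (1/4) * sXb S umax * spec (S.Uo - G.Lo * S.Wy)
def Ad (S : LSTM n m p) (G : Gains n p) (umax dmax : ℝ) : Matrix (Fin 3) (Fin 3) ℝ :=
  !![sFh S G umax dmax, alphaH S G umax, betaH S G umax;
     sOh S G umax dmax * sFh S G umax dmax, gammaH S G umax dmax,
       sOh S G umax dmax * betaH S G umax + (1/4) * sXb S umax * spec G.Lo;
     0, spec (G.Ld * S.Wy), spec ((1 : Matrix (Fin p) (Fin p) ℝ) - G.Ld)]

def setChat (S : LSTM n m p) (G : Gains n p) (umax dmax : ℝ) : Set (Fin n → ℝ) :=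
  {c | vinf c ≤ sIh S G umax dmax * sCb S umax / (1 - sFh S G umax dmax)}
def setIhat (S : LSTM n m p) (G : Gains n p) (umax dmax : ℝ) : Set (AugState n p) :=
  (setChat S G umax dmax) ×ˢ ((setH n) ×ˢ (setD p dmax))

/-- Incremental Lyapunov function for the LSTM. -/
def Vs {n : ℕ} (Ps : Matrix (Fin 2) (Fin 2) ℝ) (xa xb : State n) : ℝ :=
  wnorm Ps ![enorm (xa.1 - xb.1), enorm (xa.2 - xb.2)]

/-- Lyapunov function for the observer estimation error. -/
def Vo {n p : ℕ} (Po : Matrix (Fin 3) (Fin 3) ℝ) (χh χ : AugState n p) : ℝ :=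
  wnorm Po ![enorm (χh.1 - χ.1), enorm (χh.2.1 - χ.2.1), enorm (χh.2.2 - χ.2.2)]

/-- Disturbance-augmented LSTM update applied to the observer state. -/
def faug (S : LSTM n m p) (χ : AugState n p) (u : Fin m → ℝ) : AugState n p :=
  (stepC S u χ.1 χ.2.1, stepH S u χ.1 χ.2.1, χ.2.2)

def alphaBar (S : LSTM n m p) (G : Gains n p) (umax dmax : ℝ) : ℝ :=
  (1/4) * (sIh S G umax dmax * sCb S umax / (1 - sFh S G umax dmax)) * spec (G.Lf * S.Wy) +
    (1/4) * sCb S umax * spec (G.Li * S.Wy)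
def betaBar (S : LSTM n m p) (G : Gains n p) (umax dmax : ℝ) : ℝ :=
  (1/4) * (sIh S G umax dmax * sCb S umax / (1 - sFh S G umax dmax)) * spec G.Lf +
    (1/4) * sCb S umax * spec G.Li
def gammaBar (S : LSTM n m p) (G : Gains n p) (umax dmax : ℝ) : ℝ :=
  (1/4) * Real.tanh (sIh S G umax dmax * sCb S umax / (1 - sFh S G umax dmax))
def Lmat (S : LSTM n m p) (G : Gains n p) (umax dmax : ℝ) : Matrix (Fin 3) (Fin 3) ℝ :=
  !![0, alphaBar S G umax dmax, betaBar S G umax dmax;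
     0, gammaBar S G umax dmax * spec (G.Lo * S.Wy) + sOb S umax * alphaBar S G umax dmax,
       gammaBar S G umax dmax * spec G.Lo + sOb S umax * betaBar S G umax dmax;
     0, spec (G.Ld * S.Wy), spec G.Ld]

/-! With the input held constant at `u`, the δISS estimate says that any two trajectories of
`x ↦ f(x, u)` starting in `X` approach each other like `β(‖x_a - x_b‖, k) → 0`. Two equilibria
in `X` are trajectories at constant distance, so they coincide. Comparing the trajectory from
`0 ∈ X` with the one from `f(0, u)` shows that consecutive iterates get arbitrarily close; as `X`
is compact and invariant, a limit point of the orbit is then an equilibrium. The disturbance is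
forced to be `d* = y - g(x*)`. -/

theorem sigmoid_eq_real_sigmoid : sigmoid = Real.sigmoid :=
  funext fun _ => one_div _

theorem tanh_monotone : Monotone Real.tanh := fun x y hxy => by
  rwa [← Real.artanh_le_artanh_iff ⟨Real.neg_one_lt_tanh x, Real.tanh_lt_one x⟩
    ⟨Real.neg_one_lt_tanh y, Real.tanh_lt_one y⟩, Real.artanh_tanh, Real.artanh_tanh]

theorem abs_tanh_le_tanh_of_abs_le {z b : ℝ} (h : |z| ≤ b) : |Real.tanh z| ≤ Real.tanh b := by
  rw [abs_le] at h ⊢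
  exact ⟨by simpa only [Real.tanh_neg] using tanh_monotone h.1, tanh_monotone h.2⟩

@[fun_prop]
theorem continuous_tanh : Continuous Real.tanh := by
  simp only [funext Real.tanh_eq_sinh_div_cosh]
  exact Real.continuous_sinh.div Real.continuous_cosh fun x => (Real.cosh_pos x).ne'

theorem vinf_eq_norm {k : ℕ} (v : Fin k → ℝ) : vinf v = ‖v‖ :=
  le_antisymm (Real.iSup_le (fun i => norm_le_pi_norm v i) (norm_nonneg v))
    ((pi_norm_le_iff_of_nonneg (Real.iSup_nonneg fun i => abs_nonneg (v i))).2 fun i =>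
      le_ciSup (f := fun i => |v i|) (Set.finite_range _).bddAbove i)

theorem abs_mulVec_apply_le {a b : ℕ} (A : Matrix (Fin a) (Fin b) ℝ) (v : Fin b → ℝ)
    {r : ℝ} (hv : ‖v‖ ≤ r) (j : Fin a) : |(A *ᵥ v) j| ≤ ∑ k, |r * A j k| := by
  simp only [Matrix.mulVec, dotProduct]
  refine (Finset.abs_sum_le_sum_abs _ _).trans (Finset.sum_le_sum fun k _ => ?_)
  rw [abs_mul, abs_mul, mul_comm |r|]
  exact mul_le_mul_of_nonneg_left ((norm_le_pi_norm v k).trans (hv.trans (le_abs_self r)))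
    (abs_nonneg _)

theorem abs_gate_le_rowNorm3 {umax : ℝ} (W : Matrix (Fin n) (Fin m) ℝ)
    (U : Matrix (Fin n) (Fin n) ℝ) (b : Fin n → ℝ) {u : Fin m → ℝ} {h : Fin n → ℝ}
    (hu : ‖u‖ ≤ umax) (hh : ‖h‖ ≤ 1) (j : Fin n) :
    |(W *ᵥ u + U *ᵥ h + b) j| ≤ rowNorm3 umax W U b := by
  have hU : |(U *ᵥ h) j| ≤ ∑ k, |U j k| := by
    simpa only [one_mul] using abs_mulVec_apply_le U h hh j
  calc |(W *ᵥ u + U *ᵥ h + b) j| ≤ |(W *ᵥ u) j| + |(U *ᵥ h) j| + |b j| := abs_add_three _ _ _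
    _ ≤ ∑ k, |umax * W j k| + ∑ k, |U j k| + |b j| := by
      gcongr
      exact abs_mulVec_apply_le W u hu j
    _ ≤ rowNorm3 umax W U b :=
      le_ciSup (f := fun i => ∑ k, |umax * W i k| + ∑ k, |U i k| + |b i|)
        (Set.finite_range _).bddAbove j

section Invariance

variable (S : LSTM n m p) (umax : ℝ)

theorem sCb_nonneg : 0 ≤ sCb S umax := by
  have h0 : 0 ≤ rowNorm3 umax S.Wc S.Uc S.bc := Real.iSup_nonneg fun i => by positivity
  simpa only [sCb, Real.tanh_zero] using tanh_monotone h0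

theorem one_sub_sFb_pos : 0 < 1 - sFb S umax := by
  simpa only [sFb, sigmoid_eq_real_sigmoid, sub_pos] using Real.sigmoid_lt_one _

theorem cBound_nonneg : 0 ≤ sIb S umax * sCb S umax / (1 - sFb S umax) := by
  have : 0 ≤ sIb S umax := by simpa only [sIb, sigmoid_eq_real_sigmoid] using Real.sigmoid_nonneg _
  exact div_nonneg (mul_nonneg this (sCb_nonneg S umax)) (one_sub_sFb_pos S umax).le

-- The bound defining `C` is the fixed point of `r ↦ σ̄f r + σ̄i σ̄c`, whence the invariance of `C`.
theorem sFb_mul_cBound_add_eq :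
    sFb S umax * (sIb S umax * sCb S umax / (1 - sFb S umax)) + sIb S umax * sCb S umax =
      sIb S umax * sCb S umax / (1 - sFb S umax) := by
  have := (one_sub_sFb_pos S umax).ne'
  field_simp
  ring

theorem setU_eq : setU m umax = Metric.closedBall 0 umax := by
  ext u; simp only [setU, Set.mem_ofPred_eq, mem_closedBall_zero_iff, vinf_eq_norm]

theorem setX_eq : setX S umax =
    Metric.closedBall 0 (sIb S umax * sCb S umax / (1 - sFb S umax)) ×ˢ Metric.closedBall 0 1 := by
  ext x; simp only [setX, setC, setH, Set.mem_prod, Set.mem_ofPred_eq, mem_closedBall_zero_iff,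
    vinf_eq_norm]

theorem isCompact_setX : IsCompact (setX S umax) := by
  rw [setX_eq]
  exact (isCompact_closedBall _ _).prod (isCompact_closedBall _ _)

theorem zero_mem_setX : (0 : State n) ∈ setX S umax := by
  simp [setX_eq, cBound_nonneg]

variable {S umax}

theorem abs_stepC_le {u : Fin m → ℝ} {c h : Fin n → ℝ} (hu : ‖u‖ ≤ umax) (hh : ‖h‖ ≤ 1)
    (j : Fin n) : |stepC S u c h j| ≤ sFb S umax * ‖c‖ + sIb S umax * sCb S umax := by
  simp only [stepC, sFb, sIb, sigmoid_eq_real_sigmoid]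
  have hf := Real.sigmoid_le ((le_abs_self _).trans (abs_gate_le_rowNorm3 S.Wf S.Uf S.bf hu hh j))
  have hi := Real.sigmoid_le ((le_abs_self _).trans (abs_gate_le_rowNorm3 S.Wi S.Ui S.bi hu hh j))
  have hc := abs_tanh_le_tanh_of_abs_le (abs_gate_le_rowNorm3 S.Wc S.Uc S.bc hu hh j)
  refine (abs_add_le _ _).trans ?_
  rw [abs_mul, abs_mul, abs_of_pos (Real.sigmoid_pos _), abs_of_pos (Real.sigmoid_pos _)]
  exact add_le_add (mul_le_mul hf (norm_le_pi_norm c j) (abs_nonneg _) (Real.sigmoid_nonneg _))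
    (mul_le_mul hi hc (abs_nonneg _) (Real.sigmoid_nonneg _))

theorem abs_stepH_le_one (u : Fin m → ℝ) (c h : Fin n → ℝ) (j : Fin n) :
    |stepH S u c h j| ≤ 1 := by
  simp only [stepH, sigmoid_eq_real_sigmoid, abs_mul, abs_of_pos (Real.sigmoid_pos _)]
  exact mul_le_one₀ (Real.sigmoid_le_one _) (abs_nonneg _) (Real.abs_tanh_lt_one _).le

theorem mapsTo_step_setX {u : Fin m → ℝ} (hu : u ∈ setU m umax) :
    Set.MapsTo (fun x => step S x u) (setX S umax) (setX S umax) := by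
  rintro ⟨c, h⟩ hx
  rw [setU_eq, mem_closedBall_zero_iff] at hu
  simp only [setX_eq, Set.mem_prod, mem_closedBall_zero_iff] at hx ⊢
  have hsFb : 0 ≤ sFb S umax := by
    simpa only [sFb, sigmoid_eq_real_sigmoid] using Real.sigmoid_nonneg _
  refine ⟨(pi_norm_le_iff_of_nonneg (cBound_nonneg S umax)).2 fun j => ?_,
    (pi_norm_le_iff_of_nonneg zero_le_one).2 fun j => abs_stepH_le_one u c h j⟩
  calc ‖stepC S u c h j‖ ≤ sFb S umax * ‖c‖ + sIb S umax * sCb S umax := abs_stepC_le hu hx.2 j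
    _ ≤ _ := by gcongr; exact hx.1
    _ = _ := sFb_mul_cBound_add_eq S umax

theorem continuous_step (u : Fin m → ℝ) : Continuous fun x : State n => step S x u := by
  unfold step stepH
  unfold stepC
  simp only [sigmoid_eq_real_sigmoid]
  fun_prop

end Invariance

theorem exists_isFixedPt_of_tendsto_dist_iterate {X : Type*} [MetricSpace X] {f : X → X}
    {K : Set X} (hf : Continuous f) (hK : IsCompact K) (hfK : Set.MapsTo f K K) {x : X}
    (hx : x ∈ K) (h : Tendsto (fun k => dist (f^[k + 1] x) (f^[k] x)) atTop (nhds 0)) :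
    ∃ z ∈ K, Function.IsFixedPt f z := by
  obtain ⟨z, hzK, φ, hφ, hlim⟩ := hK.tendsto_subseq fun k => hfK.iterate k hx
  have hsucc : Tendsto (fun k => f^[φ k + 1] x) atTop (nhds z) :=
    hlim.congr_dist ((h.comp hφ.tendsto_atTop).congr fun k => dist_comm _ _)
  have hf_lim : Tendsto (fun k => f^[φ k + 1] x) atTop (nhds (f z)) := by
    simp only [Function.iterate_succ_apply']
    exact (hf.tendsto z).comp hlim
  exact ⟨z, hzK, tendsto_nhds_unique hf_lim hsucc⟩

theorem IsClassKL.tendsto_atTop_zero {β : ℝ → ℕ → ℝ} (hβ : IsClassKL β) {s : ℝ} (hs : 0 ≤ s) :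
    Tendsto (β s) atTop (nhds 0) := by
  rcases hs.eq_or_lt with rfl | hs
  · rw [show β 0 = fun _ => 0 from funext fun k => (hβ.1 k).2.2]
    exact tendsto_const_nhds
  · exact (hβ.2.1 s hs).2

theorem traj_const_eq_iterate (S : LSTM n m p) (x : State n) (u : Fin m → ℝ) (k : ℕ) :
    traj S x (fun _ => u) k = (fun x => step S x u)^[k] x := by
  induction k with
  | zero => rfl
  | succ k ih => rw [Function.iterate_succ_apply', ← ih]; rfl

theorem dist_le_xnorm_sub (x y : State n) : dist x y ≤ xnorm (x - y) := by
  have hsum₁ : 0 ≤ ∑ i, (x - y).1 i ^ 2 := Finset.sum_nonneg fun i _ => sq_nonneg _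
  have hsum₂ : 0 ≤ ∑ i, (x - y).2 i ^ 2 := Finset.sum_nonneg fun i _ => sq_nonneg _
  have hxnorm : 0 ≤ xnorm (x - y) := Real.sqrt_nonneg _
  refine max_le ((dist_pi_le_iff hxnorm).2 fun i => ?_) ((dist_pi_le_iff hxnorm).2 fun i => ?_)
  · refine Real.abs_le_sqrt (le_add_of_le_of_nonneg ?_ hsum₂)
    exact Finset.single_le_sum (f := fun i => (x - y).1 i ^ 2) (fun i _ => sq_nonneg _)
      (Finset.mem_univ i)
  · refine Real.abs_le_sqrt (le_add_of_nonneg_of_le hsum₁ ?_)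
    exact Finset.single_le_sum (f := fun i => (x - y).2 i ^ 2) (fun i _ => sq_nonneg _)
      (Finset.mem_univ i)

theorem deltaISS.exists_classKL_iterate {S : LSTM n m p} {umax : ℝ} (hISS : deltaISS S umax)
    {u : Fin m → ℝ} (hu : u ∈ setU m umax) :
    ∃ β, IsClassKL β ∧ ∀ a ∈ setX S umax, ∀ b ∈ setX S umax, ∀ k,
      xnorm ((fun x => step S x u)^[k] a - (fun x => step S x u)^[k] b) ≤ β (xnorm (a - b)) k := by
  obtain ⟨β, γ, hβ, hγ, hbound⟩ := hISS
  refine ⟨β, hβ, fun a ha b hb k => ?_⟩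
  simpa [traj_const_eq_iterate, enorm, hγ.2.1] using
    hbound k a b ha hb (fun _ => u) (fun _ => u) (fun _ _ => hu) (fun _ _ => hu)

theorem deltaISS.existsUnique_fixedPt_step {S : LSTM n m p} {umax : ℝ} (hISS : deltaISS S umax)
    {u : Fin m → ℝ} (hu : u ∈ setU m umax) : ∃! x, x ∈ setX S umax ∧ step S x u = x := by
  obtain ⟨β, hβ, hcontract⟩ := hISS.exists_classKL_iterate hu
  have hβ0 (x : State n) : Tendsto (β (xnorm x)) atTop (nhds 0) :=
    hβ.tendsto_atTop_zero (Real.sqrt_nonneg _)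
  have h0 := zero_mem_setX S umax
  have hshift (k : ℕ) : dist ((fun x => step S x u)^[k + 1] 0) ((fun x => step S x u)^[k] 0) ≤
      β (xnorm (step S 0 u - 0)) k := by
    rw [Function.iterate_succ_apply]
    exact (dist_le_xnorm_sub _ _).trans (hcontract _ (mapsTo_step_setX hu h0) 0 h0 k)
  obtain ⟨x, hxX, hfix⟩ := exists_isFixedPt_of_tendsto_dist_iterate (continuous_step u)
    (isCompact_setX S umax) (mapsTo_step_setX hu) h0
    (squeeze_zero (fun _ => dist_nonneg) hshift (hβ0 _))
  refine ⟨x, ⟨hxX, hfix⟩, fun x' ⟨hx'X, hfix'⟩ => dist_le_zero.1 ?_⟩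
  replace hfix' : Function.IsFixedPt (fun x => step S x u) x' := hfix'
  refine (dist_le_xnorm_sub x' x).trans (ge_of_tendsto' (hβ0 (x' - x)) fun k => ?_)
  simpa only [(hfix.iterate k).eq, (hfix'.iterate k).eq] using
    hcontract x' hx'X x hxX k

theorem statement5_general {n m p : ℕ} (S : LSTM n m p) (umax : ℝ)
    (hISS : deltaISS S umax) :
    ∀ u ∈ setU m umax, ∀ y : Fin p → ℝ,
      ∃! xd : State n × (Fin p → ℝ),
        xd.1 ∈ setX S umax ∧ step S xd.1 u = xd.1 ∧ y = out S xd.1 + xd.2 := by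
  intro u hu y
  obtain ⟨x, ⟨hxX, hfix⟩, huniq⟩ := hISS.existsUnique_fixedPt_step hu
  refine ⟨(x, y - out S x), ⟨hxX, hfix, (add_sub_cancel _ _).symm⟩, ?_⟩
  rintro ⟨x', d'⟩ ⟨hx'X, hfix', rfl⟩
  obtain rfl := huniq x' ⟨hx'X, hfix'⟩
  simp

/-- under δISS, for every `(u, y)` there is a unique equilibrium
state `x*` and a unique output disturbance `d*` (Lemma 2). -/
theorem statement5 {n m p : ℕ} (S : LSTM n m p) (umax : ℝ) (hu : 0 < umax)
    (hISS : deltaISS S umax) :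
    ∀ u ∈ setU m umax, ∀ y : Fin p → ℝ,
      ∃! xd : State n × (Fin p → ℝ),
        xd.1 ∈ setX S umax ∧ step S xd.1 u = xd.1 ∧ y = out S xd.1 + xd.2 :=
  statement5_general S umax hISS

end LSTMmpc
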